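/- For every integer l >= 4 with l not divisible by 3, the 3-graph C_l^- (the tight cycle of length l with one edge removed) is a subgraph of a sufficiently large blow-up of K_4^{3-}, and C_l^- is 3-partite if and only if l is divisible by 3. -/
import Mathlib


/-- The tight cycle of length `l` minus one edge, on vertex set `{0, ..., l-1} ⊆ ℕ`:
edges `{i, i+1, i+2}` (mod `l`) for `i = 0, ..., l-2` (the edge for `i = l-1` is removed). -/
def Clminus (l : ℕ) : Finset (Finset ℕ) :=
  (Finset.range (l - 1)).image (fun i => ({i, (i + 1) % l, (i + 2) % l} : Finset ℕ))

/-- `K_4^{3-}` on `Fin 4`: edges `{123, 124, 134}` (all containing vertex `0`). -/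
def K43minus : Finset (Finset (Fin 4)) := {{0, 1, 2}, {0, 1, 3}, {0, 2, 3}}

/-- Base pattern for the case `l % 3 = 1`. -/
def patA : ℕ → Fin 4 := fun r => if r = 0 then 1 else if r = 1 then 2 else 0

/-- Coloring for the case `l % 3 = 1`. -/
def cA (l : ℕ) : ℕ → Fin 4 := fun v => if v = l - 1 then 3 else patA (v % 3)

/-- Base pattern for the case `l % 3 = 2`. -/
def patB : ℕ → Fin 4 := fun r => if r = 0 then 1 else if r = 1 then 0 else 2

/-- Coloring for the case `l % 3 = 2`. -/
def cB (l : ℕ) : ℕ → Fin 4 := fun v => if v = 0 then 3 else patB (v % 3)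

lemma fin3_pigeon (a b c d : Fin 3) (h1 : a ≠ b) (h2 : a ≠ c) (h3 : b ≠ c)
    (h4 : d ≠ b) (h5 : d ≠ c) : d = a := by
  have ha := a.isLt; have hb := b.isLt; have hc := c.isLt; have hd := d.isLt
  have e1 : a.val ≠ b.val := fun h => h1 (Fin.ext h)
  have e2 : a.val ≠ c.val := fun h => h2 (Fin.ext h)
  have e3 : b.val ≠ c.val := fun h => h3 (Fin.ext h)
  have e4 : d.val ≠ b.val := fun h => h4 (Fin.ext h)
  have e5 : d.val ≠ c.val := fun h => h5 (Fin.ext h)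
  exact Fin.ext (by omega)

lemma colA (l : ℕ) (hl : 4 ≤ l) (h1 : l % 3 = 1) :
    ∀ e ∈ Clminus l, (e.image (cA l)).card = 3 ∧ e.image (cA l) ∈ K43minus := by
  intro e he
  rw [Clminus, Finset.mem_image] at he
  obtain ⟨i, hi, rfl⟩ := he
  rw [Finset.mem_range] at hi
  rw [Finset.image_insert, Finset.image_insert, Finset.image_singleton]
  by_cases h : i + 2 < l
  · rw [Nat.mod_eq_of_lt (show i + 1 < l by omega), Nat.mod_eq_of_lt h]
    by_cases h2 : i + 2 = l - 1
    · have v1 : cA l i = 2 := by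
        simp [cA, patA, (show i ≠ l - 1 by omega), (show i % 3 = 1 by omega)]
      have v2 : cA l (i + 1) = 0 := by
        simp [cA, patA, (show i + 1 ≠ l - 1 by omega), (show (i + 1) % 3 = 2 by omega)]
      have v3 : cA l (i + 2) = 3 := by
        simp [cA, h2]
      rw [v1, v2, v3]
      exact ⟨by decide, by decide⟩
    · have r3 : i % 3 = 0 ∨ i % 3 = 1 ∨ i % 3 = 2 := by omega
      rcases r3 with r | r | r
      · have v1 : cA l i = 1 := by
          simp [cA, patA, (show i ≠ l - 1 by omega), r]
        have v2 : cA l (i + 1) = 2 := by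
          simp [cA, patA, (show i + 1 ≠ l - 1 by omega), (show (i + 1) % 3 = 1 by omega)]
        have v3 : cA l (i + 2) = 0 := by
          simp [cA, patA, (show i + 2 ≠ l - 1 by omega), (show (i + 2) % 3 = 2 by omega)]
        rw [v1, v2, v3]
        exact ⟨by decide, by decide⟩
      · have v1 : cA l i = 2 := by
          simp [cA, patA, (show i ≠ l - 1 by omega), r]
        have v2 : cA l (i + 1) = 0 := by
          simp [cA, patA, (show i + 1 ≠ l - 1 by omega), (show (i + 1) % 3 = 2 by omega)]
        have v3 : cA l (i + 2) = 1 := by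
          simp [cA, patA, (show i + 2 ≠ l - 1 by omega), (show (i + 2) % 3 = 0 by omega)]
        rw [v1, v2, v3]
        exact ⟨by decide, by decide⟩
      · have v1 : cA l i = 0 := by
          simp [cA, patA, (show i ≠ l - 1 by omega), r]
        have v2 : cA l (i + 1) = 1 := by
          simp [cA, patA, (show i + 1 ≠ l - 1 by omega), (show (i + 1) % 3 = 0 by omega)]
        have v3 : cA l (i + 2) = 2 := by
          simp [cA, patA, (show i + 2 ≠ l - 1 by omega), (show (i + 2) % 3 = 1 by omega)]
        rw [v1, v2, v3]
        exact ⟨by decide, by decide⟩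
  · have hi2 : i = l - 2 := by omega
    rw [Nat.mod_eq_of_lt (show i + 1 < l by omega), show i + 2 = l by omega, Nat.mod_self]
    have v1 : cA l i = 0 := by
      simp [cA, patA, (show i ≠ l - 1 by omega), (show i % 3 = 2 by omega)]
    have v2 : cA l (i + 1) = 3 := by
      simp [cA, (show i + 1 = l - 1 by omega)]
    have v3 : cA l 0 = 1 := by
      simp [cA, patA, (show (0 : ℕ) ≠ l - 1 by omega)]
    rw [v1, v2, v3]
    exact ⟨by decide, by decide⟩

lemma colB (l : ℕ) (hl : 4 ≤ l) (h1 : l % 3 = 2) :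
    ∀ e ∈ Clminus l, (e.image (cB l)).card = 3 ∧ e.image (cB l) ∈ K43minus := by
  intro e he
  rw [Clminus, Finset.mem_image] at he
  obtain ⟨i, hi, rfl⟩ := he
  rw [Finset.mem_range] at hi
  rw [Finset.image_insert, Finset.image_insert, Finset.image_singleton]
  by_cases h : i + 2 < l
  · rw [Nat.mod_eq_of_lt (show i + 1 < l by omega), Nat.mod_eq_of_lt h]
    by_cases h0 : i = 0
    · subst h0
      have v1 : cB l 0 = 3 := by simp [cB]
      have v2 : cB l 1 = 0 := by simp [cB, patB]
      have v3 : cB l 2 = 2 := by simp [cB, patB]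
      rw [v1, v2, v3]
      exact ⟨by decide, by decide⟩
    · have r3 : i % 3 = 0 ∨ i % 3 = 1 ∨ i % 3 = 2 := by omega
      rcases r3 with r | r | r
      · have v1 : cB l i = 1 := by simp [cB, patB, h0, r]
        have v2 : cB l (i + 1) = 0 := by
          simp [cB, patB, (show i + 1 ≠ 0 by omega), (show (i + 1) % 3 = 1 by omega)]
        have v3 : cB l (i + 2) = 2 := by
          simp [cB, patB, (show i + 2 ≠ 0 by omega), (show (i + 2) % 3 = 2 by omega)]
        rw [v1, v2, v3]
        exact ⟨by decide, by decide⟩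
      · have v1 : cB l i = 0 := by simp [cB, patB, h0, r]
        have v2 : cB l (i + 1) = 2 := by
          simp [cB, patB, (show i + 1 ≠ 0 by omega), (show (i + 1) % 3 = 2 by omega)]
        have v3 : cB l (i + 2) = 1 := by
          simp [cB, patB, (show i + 2 ≠ 0 by omega), (show (i + 2) % 3 = 0 by omega)]
        rw [v1, v2, v3]
        exact ⟨by decide, by decide⟩
      · have v1 : cB l i = 2 := by simp [cB, patB, h0, r]
        have v2 : cB l (i + 1) = 1 := by
          simp [cB, patB, (show i + 1 ≠ 0 by omega), (show (i + 1) % 3 = 0 by omega)]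
        have v3 : cB l (i + 2) = 0 := by
          simp [cB, patB, (show i + 2 ≠ 0 by omega), (show (i + 2) % 3 = 1 by omega)]
        rw [v1, v2, v3]
        exact ⟨by decide, by decide⟩
  · have hi2 : i = l - 2 := by omega
    rw [Nat.mod_eq_of_lt (show i + 1 < l by omega), show i + 2 = l by omega, Nat.mod_self]
    have v1 : cB l i = 1 := by
      simp [cB, patB, (show i ≠ 0 by omega), (show i % 3 = 0 by omega)]
    have v2 : cB l (i + 1) = 0 := by
      simp [cB, patB, (show i + 1 ≠ 0 by omega), (show (i + 1) % 3 = 1 by omega)]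
    have v3 : cB l 0 = 3 := by simp [cB]
    rw [v1, v2, v3]
    exact ⟨by decide, by decide⟩

lemma no3part (l : ℕ) (hl : 4 ≤ l) (hnd : ¬ 3 ∣ l) (p : ℕ → Fin 3)
    (hp : ∀ e ∈ Clminus l, ∀ x ∈ e, ∀ y ∈ e, x ≠ y → p x ≠ p y) : False := by
  have hmem : ∀ i, i < l - 1 →
      ({i, (i + 1) % l, (i + 2) % l} : Finset ℕ) ∈ Clminus l := fun i hi =>
    Finset.mem_image.mpr ⟨i, Finset.mem_range.mpr hi, rfl⟩
  have hedge : ∀ i, i + 2 < l → ∀ x ∈ ({i, i + 1, i + 2} : Finset ℕ),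
      ∀ y ∈ ({i, i + 1, i + 2} : Finset ℕ), x ≠ y → p x ≠ p y := by
    intro i hi
    have h := hp _ (hmem i (by omega))
    rwa [Nat.mod_eq_of_lt (show i + 1 < l by omega), Nat.mod_eq_of_lt hi] at h
  have hstep : ∀ i, i + 4 ≤ l → p (i + 3) = p i := by
    intro i hi
    have h1 := hedge i (by omega)
    have h2 := hedge (i + 1) (by omega)
    have a1 : p i ≠ p (i + 1) := h1 i (by simp) (i + 1) (by simp) (by omega)
    have a2 : p i ≠ p (i + 2) := h1 i (by simp) (i + 2) (by simp) (by omega)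
    have a3 : p (i + 1) ≠ p (i + 2) := h1 (i + 1) (by simp) (i + 2) (by simp) (by omega)
    have b2 : p (i + 3) ≠ p (i + 1) :=
      h2 (i + 3) (by simp) (i + 1) (by simp) (by omega)
    have b3 : p (i + 3) ≠ p (i + 2) :=
      h2 (i + 3) (by simp) (i + 2) (by simp) (by omega)
    exact fin3_pigeon _ _ _ _ a1 a2 a3 b2 b3
  have hper : ∀ k, k ≤ l - 1 → p k = p (k % 3) := by
    intro k
    induction k using Nat.strong_induction_on with
    | _ k ih =>
      intro hk
      by_cases h3 : k < 3
      · rw [Nat.mod_eq_of_lt h3]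
      · have h := hstep (k - 3) (by omega)
        rw [show k - 3 + 3 = k by omega] at h
        rw [h, ih (k - 3) (by omega) (by omega)]
        congr 1
        omega
  have hE := hp _ (hmem (l - 2) (by omega))
  rw [show l - 2 + 1 = l - 1 by omega, show l - 2 + 2 = l by omega, Nat.mod_self,
    Nat.mod_eq_of_lt (show l - 1 < l by omega)] at hE
  have hcase : l % 3 = 1 ∨ l % 3 = 2 := by omega
  rcases hcase with h | h
  · have hne := hE (l - 1) (by simp) 0 (by simp) (by omega)
    apply hne
    rw [hper (l - 1) (by omega), hper 0 (by omega)]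
    congr 1
    omega
  · have hne := hE (l - 2) (by simp) 0 (by simp) (by omega)
    apply hne
    rw [hper (l - 2) (by omega), hper 0 (by omega)]
    congr 1
    omega

/-- For every `l ≥ 4` not divisible by 3, `C_l^-` is a subgraph of a
sufficiently large blow-up of `K_4^{3-}` (equivalently, there is a map of its
vertices to the vertices of `K_4^{3-}`, injective on each edge, sending each edge
to an edge of `K_4^{3-}`), and `C_l^-` is 3-partite iff `3 ∣ l`. -/
theorem stmt_12 (l : ℕ) (hl : 4 ≤ l) (hnd : ¬ 3 ∣ l) :
    (∃ c : ℕ → Fin 4, ∀ e ∈ Clminus l, (e.image c).card = 3 ∧ e.image c ∈ K43minus) ∧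
    ((∃ p : ℕ → Fin 3, ∀ e ∈ Clminus l, ∀ x ∈ e, ∀ y ∈ e, x ≠ y → p x ≠ p y) ↔ 3 ∣ l) := by
  constructor
  · have hcase : l % 3 = 1 ∨ l % 3 = 2 := by omega
    rcases hcase with h | h
    · exact ⟨cA l, colA l hl h⟩
    · exact ⟨cB l, colB l hl h⟩
  · exact iff_of_false (fun ⟨p, hp⟩ => no3part l hl hnd p hp) hnd
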